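/- Let μ > 1 and θ₁, θ₂ ∈ ℝ, and define ψ̃(z) = (e^{iμθ₁} z₁, e^{(μ/2)θ₁ + iθ₂} z₂) for z = (z₁,z₂) ∈ ℂ × (ℂ∖{0}). Then: (i) ρ̃(ψ̃(z)) = ρ̃(z) for all z ∈ ℂ × (ℂ∖{0}), so ψ̃ maps Ω̃ onto Ω̃; (ii) for every z ∈ Ω̃, log^{|e^{(μ/2)θ₁+iθ₂} z₂|}(e^{iμθ₁} z₁) = log^{|z₂|}(z₁) + iμθ₁; and (iii) for every z ∈ Ω̃, φ̃(ψ̃(z)) = (e^{iθ₁} φ̃₁(z), e^{iθ₂} φ̃₂(z)). -/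

import Mathlib

open MeasureTheory

/-- `log^t(z)`: the branch of the logarithm of `z` whose imaginary part lies in
`[log t², log t² + 2π)`. -/
noncomputable def logT (t : ℝ) (z : ℂ) : ℂ :=
  Complex.log z +
    ((2 * Real.pi * (⌈(Real.log (t ^ 2) - (Complex.log z).im) / (2 * Real.pi)⌉ : ℤ) : ℝ) : ℂ) *
      Complex.I

/-- `ρ̃(z) = |z₁ + e^{i log|z₂|²}|² - 1`. -/
noncomputable def rhoT (z : ℂ × ℂ) : ℝ :=
  ‖z.1 + Complex.exp (Complex.I * (Real.log (‖z.2‖ ^ 2) : ℂ))‖ ^ 2 - 1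

/-- `Ω̃ = {z ∈ ℂ × (ℂ∖{0}) : ρ̃(z) < 0}`. -/
def OmegaT : Set (ℂ × ℂ) := {z | z.2 ≠ 0 ∧ rhoT z < 0}

/-- `φ̃(z) = (exp((log^{|z₂|}(z₁) - log 2)/μ), z₂ exp(½(π + i log^{|z₂|}(z₁))))`. -/
noncomputable def phiT (μ : ℝ) (z : ℂ × ℂ) : ℂ × ℂ :=
  (Complex.exp ((logT (‖z.2‖) z.1 - (Real.log 2 : ℂ)) / (μ : ℂ)),
   z.2 * Complex.exp (((Real.pi : ℂ) + Complex.I * logT (‖z.2‖) z.1) / 2))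

/-- The Reinhardt domain
`D_μ = {w ∈ ℂ² : 0 < |w₁| < 1 and |log |w₂|²| < arccos(|w₁|^μ)}`. -/
def Dset (μ : ℝ) : Set (ℂ × ℂ) :=
  {w | 0 < ‖w.1‖ ∧ ‖w.1‖ < 1 ∧
    |Real.log (‖w.2‖ ^ 2)| < Real.arccos (‖w.1‖ ^ μ)}

/-!
`ψ̃` multiplies `z₁` by `e^{iμθ₁}` and `|z₂|²` by `e^{μθ₁}`. Hence it shifts `log |z₂|²` by `μθ₁`
and rotates `z₁` and `e^{i log |z₂|²}` by the same phase, which preserves `ρ̃`. The window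
`[log |z₂|², log |z₂|² + 2π)` selecting the branch `log^{|z₂|}` also moves up by `μθ₁`, so by
uniqueness of that branch `log^{|ψ̃₂ z|}(ψ̃₁ z) = log^{|z₂|}(z₁) + iμθ₁`; substituting this into
`φ̃` gives the rotation by `(e^{iθ₁}, e^{iθ₂})`.
-/

open Complex

theorem logT_im_mem (t : ℝ) (z : ℂ) :
    Real.log (t ^ 2) ≤ (logT t z).im ∧ (logT t z).im < Real.log (t ^ 2) + 2 * Real.pi := by
  set x := (Real.log (t ^ 2) - (log z).im) / (2 * Real.pi)
  have hx : x * (2 * Real.pi) = Real.log (t ^ 2) - (log z).im := by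
    simp only [x]
    field_simp
  have him : (logT t z).im = (log z).im + 2 * Real.pi * ⌈x⌉ := by simp [logT, x]
  have hle := Int.le_ceil x
  have hlt := Int.ceil_lt_add_one x
  constructor <;> nlinarith [Real.pi_pos]

theorem exp_logT (t : ℝ) {z : ℂ} (hz : z ≠ 0) : exp (logT t z) = z := by
  rw [logT, exp_add, exp_log hz]
  convert mul_one z using 2
  convert exp_int_mul_two_pi_mul_I ⌈(Real.log (t ^ 2) - (log z).im) / (2 * Real.pi)⌉ using 2
  push_cast
  ring

theorem logT_eq_of_exp_eq {t : ℝ} {z w : ℂ} (hw : exp w = z)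
    (him : Real.log (t ^ 2) ≤ w.im ∧ w.im < Real.log (t ^ 2) + 2 * Real.pi) :
    logT t z = w := by
  obtain ⟨n, rfl⟩ := exp_eq_exp_iff_exists_int.mp (hw.trans (exp_log (hw ▸ exp_ne_zero w)).symm)
  have hceil : ⌈(Real.log (t ^ 2) - (log z).im) / (2 * Real.pi)⌉ = n := by
    have hwim : (log z + n * (2 * Real.pi * I)).im = (log z).im + 2 * Real.pi * n := by
      simp only [add_im, mul_im, mul_re, intCast_re, intCast_im, re_ofNat, im_ofNat, ofReal_re,
        ofReal_im, I_re, I_im]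
      ring
    rw [hwim] at him
    rw [Int.ceil_eq_iff, lt_div_iff₀ Real.two_pi_pos, div_le_iff₀ Real.two_pi_pos]
    constructor <;> linarith
  rw [logT, hceil]
  push_cast
  ring

theorem logT_exp_I_mul {s t r : ℝ} {z : ℂ} (hst : Real.log (s ^ 2) = Real.log (t ^ 2) + r)
    (hz : z ≠ 0) : logT s (exp (I * r) * z) = logT t z + I * r := by
  apply logT_eq_of_exp_eq
  · rw [exp_add, exp_logT t hz, mul_comm]
  · obtain ⟨hle, hlt⟩ := logT_im_mem t z
    simp only [add_im, mul_im, I_re, I_im, ofReal_re, ofReal_im, hst]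
    constructor <;> linarith

theorem log_sq_norm_exp_mul (a : ℂ) {w : ℂ} (hw : w ≠ 0) :
    Real.log (‖exp a * w‖ ^ 2) = 2 * a.re + Real.log (‖w‖ ^ 2) := by
  rw [norm_mul, norm_exp, mul_pow, Real.log_mul (by positivity) (by positivity), Real.log_pow,
    Real.log_exp]
  push_cast
  ring

/-- The paper's `ψ̃`, with `r = μ θ₁` and `s = θ₂`. -/
noncomputable def psiT (r s : ℝ) (z : ℂ × ℂ) : ℂ × ℂ :=
  (exp (I * r) * z.1, exp (r / 2 + I * s) * z.2)

theorem psiT_psiT_neg (r s : ℝ) (z : ℂ × ℂ) : psiT r s (psiT (-r) (-s) z) = z := by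
  simp only [psiT, ← mul_assoc, ← exp_add]
  ext <;> push_cast <;> ring_nf <;> simp

theorem log_sq_norm_psiT_snd (r s : ℝ) {z : ℂ × ℂ} (hz : z.2 ≠ 0) :
    Real.log (‖(psiT r s z).2‖ ^ 2) = r + Real.log (‖z.2‖ ^ 2) := by
  rw [psiT, log_sq_norm_exp_mul _ hz]
  congr 1
  simp only [add_re, div_ofNat_re, ofReal_re, re_mul_ofReal, I_re, zero_mul, add_zero]
  ring

theorem rhoT_psiT (r s : ℝ) {z : ℂ × ℂ} (hz : z.2 ≠ 0) : rhoT (psiT r s z) = rhoT z := by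
  have hrot : exp (I * ((r + Real.log (‖z.2‖ ^ 2) : ℝ) : ℂ)) =
      exp (I * r) * exp (I * (Real.log (‖z.2‖ ^ 2) : ℂ)) := by
    rw [← exp_add, ofReal_add, mul_add]
  rw [rhoT, log_sq_norm_psiT_snd r s hz, hrot, psiT, ← mul_add, norm_mul,
    norm_exp_I_mul_ofReal, one_mul, rhoT]

theorem fst_ne_zero_of_mem_OmegaT {z : ℂ × ℂ} (hz : z ∈ OmegaT) : z.1 ≠ 0 := by
  intro h0
  have := hz.2
  rw [rhoT, h0, zero_add, norm_exp_I_mul_ofReal] at this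
  norm_num at this

theorem psiT_mem_OmegaT (r s : ℝ) {z : ℂ × ℂ} (hz : z ∈ OmegaT) : psiT r s z ∈ OmegaT :=
  ⟨mul_ne_zero (exp_ne_zero _) hz.1, (rhoT_psiT r s hz.1).symm ▸ hz.2⟩

theorem image_psiT_OmegaT (r s : ℝ) : psiT r s '' OmegaT = OmegaT := by
  refine Set.Subset.antisymm ?_ fun w hw => ?_
  · exact Set.image_subset_iff.mpr fun z hz => psiT_mem_OmegaT r s hz
  · exact ⟨psiT (-r) (-s) w, psiT_mem_OmegaT _ _ hw, psiT_psiT_neg r s w⟩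

theorem logT_psiT (r s : ℝ) {z : ℂ × ℂ} (hz : z ∈ OmegaT) :
    logT ‖(psiT r s z).2‖ (psiT r s z).1 = logT ‖z.2‖ z.1 + I * r := by
  refine logT_exp_I_mul ?_ (fst_ne_zero_of_mem_OmegaT hz)
  rw [log_sq_norm_psiT_snd r s hz.1, add_comm]

theorem phiT_psiT {μ : ℝ} (hμ : μ ≠ 0) (θ s : ℝ) {z : ℂ × ℂ} (hz : z ∈ OmegaT) :
    phiT μ (psiT (μ * θ) s z) =
      (exp (I * θ) * (phiT μ z).1, exp (I * s) * (phiT μ z).2) := by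
  rw [phiT, phiT, logT_psiT _ _ hz, Prod.mk.injEq, ← exp_add]
  constructor
  · congr 1
    field_simp [ofReal_ne_zero.mpr hμ]
    push_cast
    ring
  · rw [psiT, mul_comm (exp _) z.2, mul_assoc, ← exp_add, mul_left_comm, ← exp_add]
    congr 2
    push_cast
    linear_combination (μ * θ / 2 : ℂ) * I_mul_I

theorem isometry_properties (μ θ₁ θ₂ : ℝ) (hμ : 1 < μ)
    (ψ : ℂ × ℂ → ℂ × ℂ)
    (hψ : ψ = fun z => (Complex.exp (Complex.I * (μ : ℂ) * (θ₁ : ℂ)) * z.1,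
      Complex.exp (((μ : ℂ) / 2) * (θ₁ : ℂ) + Complex.I * (θ₂ : ℂ)) * z.2)) :
    (∀ z : ℂ × ℂ, z.2 ≠ 0 → rhoT (ψ z) = rhoT z) ∧
    (ψ '' OmegaT = OmegaT) ∧
    (∀ z ∈ OmegaT, logT (‖(ψ z).2‖) (ψ z).1 =
      logT (‖z.2‖) z.1 + Complex.I * (μ : ℂ) * (θ₁ : ℂ)) ∧
    (∀ z ∈ OmegaT, phiT μ (ψ z) =
      (Complex.exp (Complex.I * (θ₁ : ℂ)) * (phiT μ z).1,
       Complex.exp (Complex.I * (θ₂ : ℂ)) * (phiT μ z).2)) := by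
  obtain rfl : ψ = psiT (μ * θ₁) θ₂ := by
    rw [hψ]
    ext z <;> simp only [psiT] <;> push_cast <;> ring_nf
  refine ⟨fun z hz => rhoT_psiT _ _ hz, image_psiT_OmegaT _ _, fun z hz => ?_,
    fun z hz => phiT_psiT (zero_lt_one.trans hμ).ne' θ₁ θ₂ hz⟩
  rw [logT_psiT _ _ hz, ofReal_mul, mul_assoc]
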